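/- Fix an integer k ≥ 5. There exists a constant α ≥ 0 such that for every n ≥ 1 there is a deterministic online strategy A_n for exploring the ladder grid G_{2,n} with the property: for every weighting w of G_{2,n} with weights in {1,k} that admits an exploration walk all of whose traversed edges have weight 1, cost(A_n(w)) ≤ 2·OPT(w) + α. -/

import Mathlib

/-- Vertices are pairs of naturals (row, column). -/
abbrev V : Type := ℕ × ℕ

/-- Membership in the ladder grid `G_{2,n}`: row 1 or 2, column between 1 and n. -/
def InLadder (n : ℕ) (v : V) : Prop :=
  (v.1 = 1 ∨ v.1 = 2) ∧ 1 ≤ v.2 ∧ v.2 ≤ n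

/-- Adjacency in the ladder grid `G_{2,n}`: both endpoints in the grid and
L1-distance exactly 1. -/
def LadderAdj (n : ℕ) (u v : V) : Prop :=
  InLadder n u ∧ InLadder n v ∧
    ((u.1 = v.1 ∧ (u.2 + 1 = v.2 ∨ v.2 + 1 = u.2)) ∨
     (u.2 = v.2 ∧ (u.1 + 1 = v.1 ∨ v.1 + 1 = u.1)))

/-- A weighting of `G_{2,n}` with weights in `{1, k}`, given as a symmetric
function on pairs of vertices. -/
def IsWeighting (n k : ℕ) (w : V → V → ℕ) : Prop :=
  (∀ u v, w u v = w v u) ∧ (∀ u v, LadderAdj n u v → w u v = 1 ∨ w u v = k)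

/-- The cost of a walk (a list of vertices): sum of the weights of the traversed
edges, with multiplicity. -/
def walkCost (w : V → V → ℕ) (p : List V) : ℕ :=
  ((p.zip p.tail).map fun e => w e.1 e.2).sum

/-- A walk in `G_{2,n}` starting at `s`. -/
def IsWalkFrom (n : ℕ) (s : V) (p : List V) : Prop :=
  p.head? = some s ∧ p.Chain' (LadderAdj n)

/-- An exploration walk: a walk starting at `(1,1)` visiting every vertex of the ladder. -/
def IsExploration (n : ℕ) (p : List V) : Prop :=
  IsWalkFrom n (1, 1) p ∧ ∀ v, InLadder n v → v ∈ p

/-- `OPT`: the minimum cost of an exploration walk of `G_{2,n}` under the weighting `w`. -/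
noncomputable def OPT (n : ℕ) (w : V → V → ℕ) : ℕ :=
  sInf {c | ∃ p, IsExploration n p ∧ walkCost w p = c}

/-- A deterministic online strategy for exploring `G_{2,n}` with weights in `{1,k}`:
it outputs an exploration walk for every weighting, and if two weightings agree on
all edges incident to the first `t+1` visited vertices, then the first `t+2`
vertices of the corresponding walks coincide. -/
def OnlineStrategy (n k : ℕ) (A : (V → V → ℕ) → List V) : Prop :=
  (∀ w, IsWeighting n k w → IsExploration n (A w)) ∧
  (∀ w w', IsWeighting n k w → IsWeighting n k w' → ∀ t : ℕ,
    (∀ u v, LadderAdj n u v →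
      (u ∈ (A w).take (t + 1) ∨ v ∈ (A w).take (t + 1)) → w u v = w' u v) →
    (A w).take (t + 2) = (A w').take (t + 2))

/-!
The strategy is a depth-first search from `(1, 1)` along weight-1 edges. On a cheap instance
the weight-1 edges connect all `2n` vertices, so the search visits every vertex using weight-1
edges only, and each step either discovers a new vertex or backtracks over a tree edge: the
walk has at most `2(2n - 1)` edges. Every exploration walk visits `2n` vertices, so
`OPT ≥ 2n - 1`, and the strategy is 2-competitive with additive constant `0`. Should the search
return to the root without having seen every vertex (possible only on other instances), it
walks the boustrophedon path through the ladder, so that it explores under every weighting.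
The search only reads the weights at its current vertex, which makes it online.
-/

theorem List.toFinset_append_singleton {α : Type*} [DecidableEq α] (l : List α) (v : α) :
    (l ++ [v]).toFinset = insert v l.toFinset := by
  ext; simp

theorem List.isChain_iff_forall_mem_zip_tail {α : Type*} {R : α → α → Prop} {l : List α} :
    l.IsChain R ↔ ∀ e ∈ l.zip l.tail, R e.1 e.2 := by
  induction l using List.twoStepInduction with
  | nil | singleton => simp
  | cons_cons a b l _ ih => simp_all [List.isChain_cons_cons]

/-- `dfs walk stack`: depth-first search along `nb`-edges, `stack` being the current branch
with the current vertex at its head; `follow walk rest`: the fallback, walking along the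
remaining part `rest` of a fixed route. -/
inductive Explorer (α : Type*) where
  | dfs (walk stack : List α)
  | follow (walk rest : List α)

namespace Explorer

variable {α : Type*}

def walk : Explorer α → List α
  | dfs walk _ | follow walk _ => walk

section

variable [DecidableEq α]

def step (nb : α → List α) (route : List α) : Explorer α → Option (Explorer α)
  | dfs _ [] | follow _ [] => none
  | follow walk (v :: rest) => some (follow (walk ++ [v]) rest)
  | dfs walk (u :: stack) =>
    match (nb u).find? (· ∉ walk), stack, route with
    | some v, _, _ => some (dfs (walk ++ [v]) (v :: u :: stack))
    | none, b :: _, _ => some (dfs (walk ++ [b]) stack)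
    | none, [], v :: rest =>
      if ∀ x ∈ route, x ∈ walk then none else some (follow (walk ++ [v]) rest)
    | none, [], [] => none

def run (nb : α → List α) (route : List α) (s : Explorer α) (m : ℕ) : Explorer α :=
  (fun s => (s.step nb route).getD s)^[m] s

theorem find?_notMem_eq_some {l walk : List α} {v : α} (h : l.find? (· ∉ walk) = some v) :
    v ∈ l ∧ v ∉ walk :=
  ⟨List.mem_of_find?_eq_some h, by simpa using List.find?_some h⟩

theorem find?_notMem_eq_none {l walk : List α} (h : l.find? (· ∉ walk) = none) :
    ∀ v ∈ l, v ∈ walk := fun v hv => by simpa using List.find?_eq_none.mp h v hv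

section Run

variable {nb : α → List α} {route : List α} {s : Explorer α}

theorem walk_step {s' : Explorer α} (h : s.step nb route = some s') :
    ∃ v, s'.walk = s.walk ++ [v] := by
  unfold step at h
  repeat' split at h
  all_goals first
    | (cases h; exact ⟨_, rfl⟩)
    | simp at h

theorem run_succ (m : ℕ) :
    s.run nb route (m + 1) = ((s.run nb route m).step nb route).getD (s.run nb route m) :=
  Function.iterate_succ_apply' _ _ _

theorem run_eq_of_step_eq_none {m m' : ℕ} (h : (s.run nb route m).step nb route = none)
    (hm : m ≤ m') : s.run nb route m' = s.run nb route m := by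
  induction m', hm using Nat.le_induction with
  | base => rfl
  | succ m' _ ih => rw [run_succ, ih, h]; rfl

theorem walk_run_succ (m : ℕ) :
    ∃ l, (s.run nb route (m + 1)).walk = (s.run nb route m).walk ++ l ∧ l.length ≤ 1 := by
  rw [run_succ]
  cases h : (s.run nb route m).step nb route with
  | none => exact ⟨[], by simp⟩
  | some s' =>
    obtain ⟨v, hv⟩ := walk_step h
    exact ⟨[v], hv, le_rfl⟩

theorem walk_run_prefix {m m' : ℕ} (hm : m ≤ m') :
    (s.run nb route m).walk <+: (s.run nb route m').walk := by
  induction m', hm using Nat.le_induction with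
  | base => exact List.prefix_refl _
  | succ m' _ ih =>
    obtain ⟨l, hl, -⟩ := walk_run_succ (s := s) (nb := nb) (route := route) m'
    exact hl ▸ ih.trans (List.prefix_append _ _)

theorem length_walk_run_le (m : ℕ) : (s.run nb route m).walk.length ≤ s.walk.length + m := by
  induction m with
  | zero => rfl
  | succ m ih =>
    obtain ⟨l, hl, hl1⟩ := walk_run_succ (s := s) (nb := nb) (route := route) m
    rw [hl, List.length_append]
    omega

theorem length_walk_run_or (m : ℕ) : (s.run nb route m).walk.length = s.walk.length + m ∨
    (s.run nb route m).step nb route = none := by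
  induction m with
  | zero => exact Or.inl rfl
  | succ m ih =>
    cases h : (s.run nb route m).step nb route with
    | none => exact Or.inr (by rwa [run_eq_of_step_eq_none h m.le_succ])
    | some s' =>
      obtain ⟨v, hv⟩ := walk_step h
      rw [run_succ, h, Option.getD_some, hv, List.length_append, List.length_singleton]
      rw [h] at ih
      exact Or.inl (by simp at ih; omega)

theorem take_walk_run {m m' : ℕ} (hm : m ≤ m') :
    (s.run nb route m').walk.take (s.walk.length + m) = (s.run nb route m).walk := by
  rcases length_walk_run_or (s := s) (nb := nb) (route := route) m with hlen | hstop
  · rw [← hlen, ← List.prefix_iff_eq_take.mp (walk_run_prefix hm)]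
  · rw [run_eq_of_step_eq_none hstop hm]
    exact List.take_of_length_le (length_walk_run_le m)

def StackSubsetWalk : Explorer α → Prop
  | dfs walk stack => stack ⊆ walk
  | follow _ _ => True

theorem StackSubsetWalk.step {s' : Explorer α} (hs : s.StackSubsetWalk)
    (h : s.step nb route = some s') :
    s'.StackSubsetWalk := by
  unfold Explorer.step at h
  repeat' split at h
  all_goals first
    | (cases h; simp_all [StackSubsetWalk, List.subset_def])
    | simp at h

theorem StackSubsetWalk.run (hs : s.StackSubsetWalk) (m : ℕ) :
    (s.run nb route m).StackSubsetWalk := by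
  induction m with
  | zero => exact hs
  | succ m ih =>
    rw [run_succ]
    cases h : (s.run nb route m).step nb route with
    | none => exact ih
    | some s' => exact ih.step h

theorem step_congr {nb₁ nb₂ : α → List α} (hs : s.StackSubsetWalk)
    (h : ∀ u ∈ s.walk, nb₁ u = nb₂ u) :
    s.step nb₁ route = s.step nb₂ route := by
  match s, hs with
  | dfs _ [], _ | follow _ [], _ | follow _ (_ :: _), _ => rfl
  | dfs walk (u :: stack), hs => simp only [step, h u (hs List.mem_cons_self)]

theorem run_congr {nb₁ nb₂ : α → List α} (hs : s.StackSubsetWalk) {m : ℕ}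
    (h : ∀ i < m, ∀ u ∈ (s.run nb₁ route i).walk, nb₁ u = nb₂ u) :
    s.run nb₁ route m = s.run nb₂ route m := by
  induction m with
  | zero => rfl
  | succ m ih =>
    have hm := ih fun i hi => h i (by omega)
    rw [run_succ, run_succ, ← hm, step_congr (hs.run m) (h m m.lt_succ_self)]

end Run

-- A run makes at most `3 * route.length` moves, see `Inv.length_walk_le`.
def explore (nb : α → List α) (route : List α) (root : α) : List α :=
  ((dfs [root] [root]).run nb route (3 * route.length + 1)).walk

theorem take_explore_congr {nb₁ nb₂ : α → List α} {route : List α} {root : α} {t : ℕ}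
    (h : ∀ u ∈ (explore nb₁ route root).take (t + 1), nb₁ u = nb₂ u) :
    (explore nb₁ route root).take (t + 2) = (explore nb₂ route root).take (t + 2) := by
  have hs : (dfs [root] [root]).StackSubsetWalk := List.Subset.refl _
  have hagree : ∀ m ≤ 3 * route.length + 1, m ≤ t + 1 →
      (dfs [root] [root]).run nb₁ route m = (dfs [root] [root]).run nb₂ route m := by
    refine fun m hmN hmt => run_congr hs fun i hi u hu => h u ?_
    have hpre : ((dfs [root] [root]).run nb₁ route i).walk <+:
        (explore nb₁ route root).take (t + 1) :=
      List.prefix_take_iff.mpr ⟨walk_run_prefix (by omega),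
        (length_walk_run_le i).trans (by simp [walk]; omega)⟩
    exact hpre.subset hu
  rcases le_total (3 * route.length + 1) (t + 1) with hN | hN
  · rw [explore, explore, hagree _ le_rfl hN]
  · have h₁ := take_walk_run (s := dfs [root] [root]) (nb := nb₁) (route := route) hN
    have h₂ := take_walk_run (s := dfs [root] [root]) (nb := nb₂) (route := route) hN
    rw [walk, List.length_singleton, add_comm] at h₁ h₂
    rw [explore, explore, h₁, h₂, hagree (t + 1) hN le_rfl]

end

variable (nb : α → List α) (route : List α) (root : α) (Adj : α → α → Prop)

def NbEdge (a b : α) : Prop := b ∈ nb a ∨ a ∈ nb b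

structure Admissible : Prop where
  adj : ∀ u, ∀ v ∈ nb u, Adj u v
  symm : ∀ u v, Adj u v → Adj v u
  chain_route : (root :: route).IsChain Adj
  mem_route : ∀ u, ∀ v ∈ nb u, v ∈ root :: route

def RouteReachable : Prop :=
  ∃ p : List α, p.head? = some root ∧ (p.IsChain fun a b => b ∈ nb a) ∧ route ⊆ p

structure FollowInv (walk rest : List α) : Prop where
  walk_head : walk.head? = some root
  chain : (walk ++ rest).IsChain Adj
  subset : route ⊆ walk ++ rest
  length_add_length_le : walk.length + rest.length ≤ 3 * route.length + 1

section
variable {route root Adj}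

theorem FollowInv.advance {walk rest : List α} {v : α}
    (hs : FollowInv route root Adj walk (v :: rest)) :
    FollowInv route root Adj (walk ++ [v]) rest := by
  obtain ⟨hhead, hchain, hsub, hlen⟩ := hs
  have hne : walk ≠ [] := by rintro rfl; simp at hhead
  refine ⟨by rw [List.head?_append_of_ne_nil _ hne, hhead], by simpa using hchain,
    by simpa using hsub, ?_⟩
  simp only [List.length_append, List.length_cons, List.length_nil] at *
  omega

end

variable [DecidableEq α]

/-- The bound on the length of the walk holds because every search step either discovers a
new vertex and pushes it, or backtracks and pops. -/
structure DfsInv (walk stack : List α) : Prop where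
  walk_head : walk.head? = some root
  stack_getLast : stack.getLast? = some root
  stack_head : stack.head? = walk.getLast?
  walk_chain : walk.IsChain (NbEdge nb)
  stack_chain : stack.IsChain (NbEdge nb)
  stack_subset : stack ⊆ walk
  walk_subset : walk ⊆ root :: route
  closed : ∀ x ∈ walk, x ∉ stack → ∀ v ∈ nb x, v ∈ walk
  length_add_length_le : walk.length + stack.length ≤ 2 * walk.toFinset.card

def Inv : Explorer α → Prop
  | dfs walk stack => DfsInv nb route root walk stack
  | follow walk rest => FollowInv route root Adj walk rest

variable {nb route root Adj}

theorem dfsInv_start : DfsInv nb route root [root] [root] where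
  walk_head := rfl
  stack_getLast := rfl
  stack_head := rfl
  walk_chain := List.isChain_singleton _
  stack_chain := List.isChain_singleton _
  stack_subset := List.Subset.refl _
  walk_subset := by simp
  closed x hx hx' := absurd hx hx'
  length_add_length_le := by simp

namespace DfsInv

variable {walk stack : List α}

theorem ne_nil (hs : DfsInv nb route root walk stack) : walk ≠ [] := by
  have := hs.walk_head
  rintro rfl; simp at this

theorem head?_append (hs : DfsInv nb route root walk stack) (l : List α) :
    (walk ++ l).head? = some root := by
  rw [List.head?_append_of_ne_nil _ hs.ne_nil, hs.walk_head]

theorem length_lt (hs : DfsInv nb route root walk stack) :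
    walk.length < 2 * (route.length + 1) := by
  have hstack : stack ≠ [] := by have := hs.stack_getLast; rintro rfl; simp at this
  have hcard : walk.toFinset.card ≤ route.length + 1 :=
    (Finset.card_le_card fun x hx =>
      List.mem_toFinset.mpr (hs.walk_subset (List.mem_toFinset.mp hx))).trans
      (List.toFinset_card_le _)
  have := hs.length_add_length_le
  have := List.length_pos_iff.mpr hstack
  omega

theorem push {u v : α} (hs : DfsInv nb route root walk (u :: stack)) (hv : v ∈ nb u)
    (hvw : v ∉ walk) (hmem : v ∈ root :: route) :
    DfsInv nb route root (walk ++ [v]) (v :: u :: stack) where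
  walk_head := hs.head?_append _
  stack_getLast := by rw [List.getLast?_cons_cons, hs.stack_getLast]
  stack_head := by simp
  walk_chain := hs.walk_chain.append (List.isChain_singleton v) fun x hx y hy => by
    simp only [← hs.stack_head, List.head?_cons, Option.mem_def, Option.some.injEq] at hx hy
    exact hx ▸ hy ▸ Or.inl hv
  stack_chain := List.isChain_cons_cons.mpr ⟨Or.inr hv, hs.stack_chain⟩
  stack_subset := List.cons_subset.mpr ⟨by simp,
    List.Subset.trans hs.stack_subset (List.subset_append_left _ _)⟩
  walk_subset := List.append_subset.mpr ⟨hs.walk_subset, by simpa using hmem⟩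
  closed x hx hxs y hy := by
    have hxw : x ∈ walk := by
      rcases List.mem_append.mp hx with hx | hx
      · exact hx
      · exact absurd (List.mem_singleton.mp hx ▸ List.mem_cons_self) hxs
    exact List.mem_append_left _ (hs.closed x hxw (fun h => hxs (List.mem_cons_of_mem _ h)) y hy)
  length_add_length_le := by
    have := hs.length_add_length_le
    rw [List.toFinset_append_singleton, Finset.card_insert_of_notMem (by simpa using hvw)]
    simp only [List.length_append, List.length_cons, List.length_nil] at *
    omega

theorem pop {a b : α} (hs : DfsInv nb route root walk (a :: b :: stack))
    (hdone : ∀ v ∈ nb a, v ∈ walk) : DfsInv nb route root (walk ++ [b]) (b :: stack) := by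
  have hb : b ∈ walk := hs.stack_subset (by simp)
  have hlast : walk.getLast? = some a := by rw [← hs.stack_head]; rfl
  have hab : NbEdge nb a b := (List.isChain_cons_cons.mp hs.stack_chain).1
  refine ⟨hs.head?_append _, ?_, by simp, ?_, hs.stack_chain.tail, ?_, ?_, ?_, ?_⟩
  · rw [← hs.stack_getLast, List.getLast?_cons_cons]
  · refine hs.walk_chain.append (List.isChain_singleton b) fun x hx y hy => ?_
    rw [hlast, Option.mem_some_iff] at hx
    rw [List.head?_singleton, Option.mem_some_iff] at hy
    exact hx ▸ hy ▸ hab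
  · exact List.Subset.trans (fun x hx => hs.stack_subset (List.mem_cons_of_mem a hx))
      (List.subset_append_left _ _)
  · exact List.append_subset.mpr ⟨hs.walk_subset, by simpa using hs.walk_subset hb⟩
  · intro x hx hxs y hy
    have hxw : x ∈ walk :=
      (List.mem_append.mp hx).elim id fun h => List.mem_singleton.mp h ▸ hb
    by_cases hxa : x = a
    · exact List.mem_append_left _ (hdone y (hxa ▸ hy))
    · refine List.mem_append_left _ (hs.closed x hxw (fun hx' => hxs ?_) y hy)
      simpa [hxa] using hx'
  · have := hs.length_add_length_le
    rw [List.toFinset_append_singleton, Finset.insert_eq_of_mem (List.mem_toFinset.mpr hb)]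
    simp only [List.length_append, List.length_cons, List.length_nil] at *
    omega

theorem getLast?_eq_root {u : α} (hs : DfsInv nb route root walk [u]) :
    walk.getLast? = some root := by
  rw [← hs.stack_head, ← hs.stack_getLast]; rfl

theorem isChain_adj (hs : DfsInv nb route root walk stack) (hA : Admissible nb route root Adj) :
    walk.IsChain Adj :=
  hs.walk_chain.imp fun a b hab => hab.elim (hA.adj a b) (hA.symm b a ∘ hA.adj b a)

theorem switch {u v : α} {rest : List α} (hs : DfsInv nb route root walk [u])
    (hA : Admissible nb route root Adj) (hroute : route = v :: rest) :
    FollowInv route root Adj (walk ++ [v]) rest := by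
  refine ⟨hs.head?_append _, ?_, ?_, ?_⟩
  · rw [List.append_assoc, List.singleton_append, ← hroute]
    refine (hs.isChain_adj hA).append hA.chain_route.tail fun x hx y hy => ?_
    rw [hs.getLast?_eq_root, Option.mem_some_iff] at hx
    exact hx ▸ List.isChain_cons.mp hA.chain_route |>.1 y hy
  · simp [hroute]
  · have := hs.length_lt
    simp only [hroute, List.length_append, List.length_cons, List.length_nil] at *
    omega

theorem subset_of_reachable {u : α} (hs : DfsInv nb route root walk [u])
    (hdone : ∀ v ∈ nb u, v ∈ walk) {p : List α} (hp : p.IsChain fun a b => b ∈ nb a)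
    (hhead : p.head? = some root) : p ⊆ walk := by
  have hu : u = root := by simpa using hs.stack_getLast
  have hclosed : ∀ x ∈ walk, ∀ v ∈ nb x, v ∈ walk := fun x hx => by
    by_cases hxu : x = u
    · exact hxu ▸ hdone
    · exact hs.closed x hx (by simpa using hxu)
  refine fun x hx => hp.induction (· ∈ walk) p (fun a b hab ha => hclosed a ha b hab)
    (fun hne => ?_) x hx
  rw [List.head?_eq_some_head hne, Option.some.injEq] at hhead
  exact hhead ▸ hu ▸ hs.stack_subset List.mem_cons_self

theorem exists_step_eq_dfs (hs : DfsInv nb route root walk stack)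
    (hreach : RouteReachable nb route root)
    {s' : Explorer α} (h : (dfs walk stack).step nb route = some s') :
    ∃ walk' stack', s' = dfs walk' stack' := by
  match stack, hs with
  | [], _ => simp [step] at h
  | u :: stack, hs =>
    cases hf : (nb u).find? (· ∉ walk) with
    | some v => simp only [step, hf, Option.some.injEq] at h; exact ⟨_, _, h.symm⟩
    | none =>
      cases stack with
      | cons b stack => simp only [step, hf, Option.some.injEq] at h; exact ⟨_, _, h.symm⟩
      | nil =>
        obtain ⟨p, hhead, hp, hroute⟩ := hreach
        have hvisited : ∀ x ∈ route, x ∈ walk := fun x hx =>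
          hs.subset_of_reachable (find?_notMem_eq_none hf) hp hhead (hroute hx)
        cases route with
        | nil => simp only [step, hf, reduceCtorEq] at h
        | cons v rest => simp only [step, hf, if_pos hvisited, reduceCtorEq] at h

end DfsInv

namespace Inv

variable {s s' : Explorer α}

theorem step (hA : Admissible nb route root Adj) (hs : s.Inv nb route root Adj)
    (h : s.step nb route = some s') : s'.Inv nb route root Adj := by
  match s, hs with
  | dfs _ [], _ | follow _ [], _ => simp [Explorer.step] at h
  | follow walk (v :: rest), hs =>
    simp only [Explorer.step, Option.some.injEq] at h
    exact h ▸ FollowInv.advance hs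
  | dfs walk (u :: stack), hs =>
    cases hf : (nb u).find? (· ∉ walk) with
    | some v =>
      simp only [Explorer.step, hf, Option.some.injEq] at h
      obtain ⟨hv, hvw⟩ := find?_notMem_eq_some hf
      exact h ▸ DfsInv.push hs hv hvw (hA.mem_route u v hv)
    | none =>
      cases stack with
      | cons b stack =>
        simp only [Explorer.step, hf, Option.some.injEq] at h
        exact h ▸ DfsInv.pop hs (find?_notMem_eq_none hf)
      | nil =>
        cases route with
        | nil => simp only [Explorer.step, hf, reduceCtorEq] at h
        | cons v rest =>
          simp only [Explorer.step, hf] at h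
          split_ifs at h
          exact Option.some.inj h ▸ DfsInv.switch hs hA rfl

theorem run (hA : Admissible nb route root Adj) (hs : s.Inv nb route root Adj) (m : ℕ) :
    (s.run nb route m).Inv nb route root Adj := by
  induction m with
  | zero => exact hs
  | succ m ih =>
    rw [run_succ]
    cases h : (s.run nb route m).step nb route with
    | none => exact ih
    | some s' => exact ih.step hA h

theorem length_walk_le (hs : s.Inv nb route root Adj) : s.walk.length ≤ 3 * route.length + 1 := by
  match s, hs with
  | dfs _ _, hs => have := DfsInv.length_lt hs; simp only [walk]; omega
  | follow _ _, hs => have := FollowInv.length_add_length_le hs; simp only [walk]; omega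

theorem subset_walk (hs : s.Inv nb route root Adj) (h : s.step nb route = none) :
    route ⊆ s.walk := by
  match s, hs with
  | dfs _ [], hs => simpa using hs.stack_getLast
  | follow _ [], hs => simpa [walk] using hs.subset
  | follow _ (_ :: _), _ => simp [Explorer.step] at h
  | dfs walk (u :: stack), hs =>
    cases hf : (nb u).find? (· ∉ walk) with
    | some v => simp only [Explorer.step, hf, reduceCtorEq] at h
    | none =>
      cases stack with
      | cons b stack => simp only [Explorer.step, hf, reduceCtorEq] at h
      | nil =>
        cases route with
        | nil => exact List.nil_subset _
        | cons v rest =>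
          simp only [Explorer.step, hf] at h
          split_ifs at h with hvisited
          exact hvisited

end Inv

theorem inv_run_start (hA : Admissible nb route root Adj) (m : ℕ) :
    ((dfs [root] [root]).run nb route m).Inv nb route root Adj :=
  Inv.run (s := dfs [root] [root]) hA dfsInv_start m

theorem step_run_eq_none (hA : Admissible nb route root Adj) :
    ((dfs [root] [root]).run nb route (3 * route.length + 1)).step nb route = none :=
  (length_walk_run_or _).resolve_left fun h => by
    have := (inv_run_start hA (3 * route.length + 1)).length_walk_le
    rw [h, walk, List.length_singleton] at this
    omega

theorem head?_explore : (explore nb route root).head? = some root := by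
  obtain ⟨l, hl⟩ := walk_run_prefix (s := dfs [root] [root]) (nb := nb) (route := route)
    (Nat.zero_le (3 * route.length + 1))
  rw [explore, ← hl]
  rfl

theorem isChain_explore (hA : Admissible nb route root Adj) :
    (explore nb route root).IsChain Adj := by
  have hs := inv_run_start hA (3 * route.length + 1)
  unfold explore
  generalize (dfs [root] [root]).run nb route (3 * route.length + 1) = s at hs
  cases s with
  | dfs walk stack => exact DfsInv.isChain_adj hs hA
  | follow walk rest => exact hs.chain.left_of_append

theorem subset_explore (hA : Admissible nb route root Adj) :
    root :: route ⊆ explore nb route root :=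
  List.cons_subset.mpr ⟨List.mem_of_mem_head? head?_explore,
    (inv_run_start hA _).subset_walk (step_run_eq_none hA)⟩

theorem explore_of_reachable (hA : Admissible nb route root Adj)
    (hreach : RouteReachable nb route root) :
    (explore nb route root).IsChain (NbEdge nb) ∧
      (explore nb route root).length < 2 * (route.length + 1) := by
  have hdfs : ∀ m, ∃ walk stack, (dfs [root] [root]).run nb route m = dfs walk stack := by
    intro m
    induction m with
    | zero => exact ⟨_, _, rfl⟩
    | succ m ih =>
      obtain ⟨walk, stack, hm⟩ := ih
      rw [run_succ, hm]
      cases h : (dfs walk stack).step nb route with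
      | none => exact ⟨_, _, rfl⟩
      | some s' =>
        have hs : DfsInv nb route root walk stack := by
          simpa only [hm, Inv] using inv_run_start hA m
        exact hs.exists_step_eq_dfs hreach h
  obtain ⟨walk, stack, h⟩ := hdfs (3 * route.length + 1)
  have hs : DfsInv nb route root walk stack := by
    simpa only [h, Inv] using inv_run_start hA (3 * route.length + 1)
  rw [explore, h]
  exact ⟨hs.walk_chain, hs.length_lt⟩

end Explorer

instance (n : ℕ) : DecidableRel (LadderAdj n) := fun u v => by
  unfold LadderAdj InLadder; infer_instance

theorem LadderAdj.symm {n : ℕ} {u v : V} (h : LadderAdj n u v) : LadderAdj n v u := by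
  obtain ⟨hu, hv, h⟩ := h
  exact ⟨hv, hu, by omega⟩

def ladderNbrs (n : ℕ) (u : V) : List V :=
  [(u.1, u.2 + 1), (u.1, u.2 - 1), (3 - u.1, u.2)].filter (LadderAdj n u ·)

theorem mem_ladderNbrs {n : ℕ} {u v : V} : v ∈ ladderNbrs n u ↔ LadderAdj n u v := by
  simp only [ladderNbrs, List.mem_filter, List.mem_cons, List.not_mem_nil, or_false,
    decide_eq_true_eq, and_iff_right_iff_imp]
  rintro ⟨⟨hu, -⟩, ⟨hv, -⟩, h⟩
  obtain ⟨a, b⟩ := u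
  obtain ⟨c, d⟩ := v
  simp only [Prod.mk.injEq] at *
  omega

def cheapNbrs (n : ℕ) (w : V → V → ℕ) (u : V) : List V :=
  (ladderNbrs n u).filter (w u · = 1)

theorem mem_cheapNbrs {n : ℕ} {w : V → V → ℕ} {u v : V} :
    v ∈ cheapNbrs n w u ↔ LadderAdj n u v ∧ w u v = 1 := by
  simp [cheapNbrs, mem_ladderNbrs]

/-- The boustrophedon path through the columns `j, …, j + m - 1`, starting in row `r`. -/
def snake : ℕ → ℕ → ℕ → List V
  | 0, _, _ => []
  | m + 1, j, r => (r, j) :: (3 - r, j) :: snake m (j + 1) (3 - r)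

theorem mem_snake {m j r : ℕ} (hr : r = 1 ∨ r = 2) {v : V} :
    v ∈ snake m j r ↔ (v.1 = 1 ∨ v.1 = 2) ∧ j ≤ v.2 ∧ v.2 < j + m := by
  induction m generalizing j r with
  | zero => simp [snake]
  | succ m ih =>
    obtain ⟨a, b⟩ := v
    simp only [snake, List.mem_cons, Prod.mk.injEq, ih (by omega : 3 - r = 1 ∨ 3 - r = 2)]
    omega

theorem isChain_snake {n m j r : ℕ} (hr : r = 1 ∨ r = 2) (hj : 1 ≤ j)
    (hjm : j + m ≤ n + 1) :
    (snake m j r).IsChain (LadderAdj n) := by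
  induction m generalizing j r with
  | zero => exact List.IsChain.nil
  | succ m ih =>
    refine List.isChain_cons_cons.mpr
      ⟨⟨⟨hr, hj, by omega⟩, ⟨by omega, hj, by omega⟩, by omega⟩, ?_⟩
    cases m with
    | zero => exact List.isChain_singleton _
    | succ m =>
      refine List.isChain_cons_cons.mpr ⟨⟨⟨by omega, hj, by omega⟩,
        ⟨by omega, by omega, by omega⟩, by omega⟩, ih (by omega) (by omega) (by omega)⟩

theorem length_snake (m j r : ℕ) : (snake m j r).length = 2 * m := by
  induction m generalizing j r with
  | zero => rfl
  | succ m ih => simp only [snake, List.length_cons, ih]; ring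

theorem mem_snake_iff_inLadder {n : ℕ} {v : V} : v ∈ snake n 1 1 ↔ InLadder n v := by
  rw [mem_snake (Or.inl rfl), InLadder]
  omega

theorem snake_eq_cons {n : ℕ} (hn : 1 ≤ n) : snake n 1 1 = (1, 1) :: (snake n 1 1).tail := by
  obtain ⟨m, rfl⟩ := Nat.exists_eq_add_of_le' hn
  rfl

def ladderStrategy (n : ℕ) (w : V → V → ℕ) : List V :=
  Explorer.explore (cheapNbrs n w) (snake n 1 1).tail (1, 1)

theorem admissible_ladder {n : ℕ} (hn : 1 ≤ n) (w : V → V → ℕ) :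
    Explorer.Admissible (cheapNbrs n w) (snake n 1 1).tail (1, 1) (LadderAdj n) where
  adj _ _ hv := (mem_cheapNbrs.mp hv).1
  symm _ _ := LadderAdj.symm
  chain_route := snake_eq_cons hn ▸ isChain_snake (Or.inl rfl) le_rfl (by omega)
  mem_route _ _ hv := snake_eq_cons hn ▸ mem_snake_iff_inLadder.mpr (mem_cheapNbrs.mp hv).1.2.1

theorem isExploration_ladderStrategy {n : ℕ} (hn : 1 ≤ n) (w : V → V → ℕ) :
    IsExploration n (ladderStrategy n w) :=
  ⟨⟨Explorer.head?_explore, Explorer.isChain_explore (admissible_ladder hn w)⟩, fun _ hv =>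
    Explorer.subset_explore (admissible_ladder hn w)
      (snake_eq_cons hn ▸ mem_snake_iff_inLadder.mpr hv)⟩

theorem take_ladderStrategy_congr {n t : ℕ} {w w' : V → V → ℕ}
    (h : ∀ u v, LadderAdj n u v → (u ∈ (ladderStrategy n w).take (t + 1) ∨
      v ∈ (ladderStrategy n w).take (t + 1)) → w u v = w' u v) :
    (ladderStrategy n w).take (t + 2) = (ladderStrategy n w').take (t + 2) :=
  Explorer.take_explore_congr fun u hu => List.filter_congr fun v hv => by
    rw [h u v (mem_ladderNbrs.mp hv) (Or.inl hu)]

theorem walkCost_le_length_sub_one {w : V → V → ℕ} {p : List V}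
    (h : ∀ e ∈ p.zip p.tail, w e.1 e.2 ≤ 1) : walkCost w p ≤ p.length - 1 := by
  have := List.sum_le_card_nsmul ((p.zip p.tail).map fun e => w e.1 e.2) 1 fun x hx => by
    obtain ⟨e, he, rfl⟩ := List.mem_map.mp hx
    exact h e he
  simpa [walkCost] using this

theorem length_sub_one_le_walkCost {w : V → V → ℕ} {p : List V}
    (h : ∀ e ∈ p.zip p.tail, 1 ≤ w e.1 e.2) : p.length - 1 ≤ walkCost w p := by
  have := List.card_nsmul_le_sum ((p.zip p.tail).map fun e => w e.1 e.2) 1 fun x hx => by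
    obtain ⟨e, he, rfl⟩ := List.mem_map.mp hx
    exact h e he
  simpa [walkCost] using this

theorem two_mul_le_length {n : ℕ} {p : List V} (hp : IsExploration n p) : 2 * n ≤ p.length :=
  calc 2 * n = (({1, 2} : Finset ℕ) ×ˢ Finset.Icc 1 n).card := by simp
    _ ≤ p.toFinset.card := Finset.card_le_card fun v hv =>
        List.mem_toFinset.mpr (hp.2 v (by simpa [InLadder] using hv))
    _ ≤ p.length := List.toFinset_card_le p

theorem two_mul_sub_one_le_OPT {n k : ℕ} {w : V → V → ℕ} {p : List V} (hk : 1 ≤ k)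
    (hw : IsWeighting n k w) (hp : IsExploration n p) : 2 * n - 1 ≤ OPT n w := by
  refine le_csInf ⟨_, p, hp, rfl⟩ ?_
  rintro _ ⟨q, hq, rfl⟩
  refine (Nat.sub_le_sub_right (two_mul_le_length hq) 1).trans
    (length_sub_one_le_walkCost fun e he => ?_)
  rcases hw.2 e.1 e.2 (List.isChain_iff_forall_mem_zip_tail.mp hq.1.2 e he) with h | h <;> omega

theorem walkCost_ladderStrategy_le {n k : ℕ} {w : V → V → ℕ} (hn : 1 ≤ n) (hk : 1 ≤ k)
    (hw : IsWeighting n k w)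
    (hcheap : ∃ p, IsExploration n p ∧ ∀ e ∈ p.zip p.tail, w e.1 e.2 = 1) :
    walkCost w (ladderStrategy n w) ≤ 2 * OPT n w := by
  obtain ⟨p, hp, hp1⟩ := hcheap
  have hreach : Explorer.RouteReachable (cheapNbrs n w) (snake n 1 1).tail (1, 1) :=
    ⟨p, hp.1.1, List.isChain_iff_forall_mem_zip_tail.mpr fun e he => mem_cheapNbrs.mpr
      ⟨List.isChain_iff_forall_mem_zip_tail.mp hp.1.2 e he, hp1 e he⟩,
      fun v hv => hp.2 v (mem_snake_iff_inLadder.mp (List.mem_of_mem_tail hv))⟩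
  obtain ⟨hchain, hlen⟩ := Explorer.explore_of_reachable (admissible_ladder hn w) hreach
  have hcost := walkCost_le_length_sub_one (w := w) fun e he => by
    rcases List.isChain_iff_forall_mem_zip_tail.mp hchain e he with h | h
    · exact (mem_cheapNbrs.mp h).2.le
    · exact (hw.1 _ _ ▸ (mem_cheapNbrs.mp h).2).le
  have hopt := two_mul_sub_one_le_OPT hk hw hp
  rw [List.length_tail, length_snake] at hlen
  unfold ladderStrategy
  omega

/-- On instances admitting an exploration walk using only weight-1 edges, there
is a deterministic online strategy that is 2-competitive. -/
theorem ladder_two_competitive_on_cheap_instances (k : ℕ) (hk : 5 ≤ k) :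
    ∃ α : ℕ, ∀ n : ℕ, 1 ≤ n →
      ∃ A : (V → V → ℕ) → List V, OnlineStrategy n k A ∧
        ∀ w, IsWeighting n k w →
          (∃ p, IsExploration n p ∧ ∀ e ∈ p.zip p.tail, w e.1 e.2 = 1) →
          walkCost w (A w) ≤ 2 * OPT n w + α :=
  ⟨0, fun _ hn => ⟨ladderStrategy _,
    ⟨fun w _ => isExploration_ladderStrategy hn w,
      fun _ _ _ _ _ h => take_ladderStrategy_congr h⟩,
    fun _ hw hcheap => walkCost_ladderStrategy_le hn (by omega) hw hcheap⟩⟩
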